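/- The matrix y is invertible in the e×e matrices over K, and for every integer i the set y^i·Δ = {y^i·M : M ∈ Δ} is equal to the set of e×e matrices M over K such that for all indices j, k (with 0 ≤ j, k ≤ e−1), the entry M j k lies in the R-submodule of K spanned by t^m, where m = −⌊(k − j − i)/e⌋ (floor of the rational number, with k, j, i regarded as integers, and t^m the integer power of t in K). -/

import Mathlib

/-- The standard hereditary order of ramification index `e` over a DVR `R` with
uniformizer `t`, inside the `e × e` matrices over the fraction field `K`. -/
def stdHereditaryOrder (R K : Type*) [CommRing R] [Field K] [Algebra R K]
    (t : R) (e : ℕ) : Set (Matrix (Fin e) (Fin e) K) :=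
  {M | ∀ i j : Fin e,
    if (j : ℕ) < (i : ℕ) then ∃ r : R, algebraMap R K (t * r) = M i j
    else ∃ r : R, algebraMap R K r = M i j}

/-- The matrix `y`: `y i j = 1` if `j = i + 1`, `y i j = t` if `(i,j) = (e-1, 0)`,
and `0` otherwise. -/
def yMat (R K : Type*) [CommRing R] [Field K] [Algebra R K] (t : R) (e : ℕ) :
    Matrix (Fin e) (Fin e) K :=
  Matrix.of fun i j =>
    if (j : ℕ) = (i : ℕ) + 1 then 1
    else if (i : ℕ) = e - 1 ∧ (j : ℕ) = 0 then algebraMap R K t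
    else 0

/-!
Write `y = diag(t ^ c₀, …, t ^ c_{e-1}) · P`, where `P` is the permutation matrix of the rotation
`j ↦ j + 1 (mod e)` and `c_j` is the carry of that addition (`1` for `j = e - 1`, else `0`).
Left multiplication by `y` therefore moves row `j + 1` to row `j` and multiplies the row that wraps
around by `t`; on the exponents `-⌊(k - j - i)/e⌋` this is exactly the passage from `i` to `i + 1`.
Hence `y` maps the lattice `L_i` of the right-hand side onto `L_{i+1}`, and since `Δ = L_0`,
induction on `i` gives `y^i Δ = L_i`.
-/

open Matrix
open scoped Pointwise

lemma Int.fdiv_add_mul_eq {r e : ℤ} (q : ℤ) (hr : 0 ≤ r) (hre : r < e) :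
    Int.fdiv (r + q * e) e = q := by
  rw [Int.add_mul_fdiv_right _ _ (by omega), Int.fdiv_eq_ediv_of_nonneg _ (by omega),
    Int.ediv_eq_zero_of_lt hr hre, zero_add]

lemma val_finRotate {e : ℕ} (j : Fin e) :
    (finRotate e j : ℕ) = if (j : ℕ) = e - 1 then 0 else (j : ℕ) + 1 := by
  obtain ⟨n, rfl⟩ := Nat.exists_eq_add_one_of_ne_zero j.pos.ne'
  rw [coe_finRotate]
  simp [Fin.ext_iff]

def finRotateCarry (e : ℕ) (j : Fin e) : ℤ := if (j : ℕ) = e - 1 then 1 else 0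

lemma finRotate_add_carry_mul {e : ℕ} (j : Fin e) :
    (finRotate e j : ℤ) + finRotateCarry e j * e = j + 1 := by
  rw [val_finRotate, finRotateCarry]
  split_ifs <;> push_cast <;> omega

def hereditaryExponent (e : ℕ) (i : ℤ) (j k : Fin e) : ℤ :=
  -Int.fdiv ((k : ℤ) - (j : ℤ) - i) (e : ℤ)

lemma hereditaryExponent_zero {e : ℕ} (j k : Fin e) :
    hereditaryExponent e 0 j k = if (k : ℕ) < (j : ℕ) then 1 else 0 := by
  rw [hereditaryExponent, sub_zero]
  split_ifs with hkj
  · rw [show (k : ℤ) - j = ((k : ℤ) - j + e) + (-1) * e by ring,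
      Int.fdiv_add_mul_eq _ (by omega) (by omega), neg_neg]
  · rw [Int.fdiv_eq_ediv_of_nonneg _ (by omega), Int.ediv_eq_zero_of_lt (by omega) (by omega),
      neg_zero]

lemma hereditaryExponent_add_one {e : ℕ} (i : ℤ) (j k : Fin e) :
    hereditaryExponent e (i + 1) j k =
      finRotateCarry e j + hereditaryExponent e i (finRotate e j) k := by
  have hrot := finRotate_add_carry_mul j
  rw [hereditaryExponent, hereditaryExponent,
    show (k : ℤ) - j - (i + 1) = ((k : ℤ) - (finRotate e j : ℕ) - i) + (-finRotateCarry e j) * e by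
      linarith,
    Int.add_mul_fdiv_right _ _ (by have := j.pos; omega)]
  ring

lemma mul_mem_span_singleton_mul_iff {R K : Type*} [CommSemiring R] [CommRing K] [IsDomain K]
    [Algebra R K] {d a x : K} (hd : d ≠ 0) :
    d * x ∈ Submodule.span R {d * a} ↔ x ∈ Submodule.span R {a} := by
  simp only [Submodule.mem_span_singleton, ← mul_smul_comm, mul_right_inj' hd]

lemma mem_span_algebraMap_iff {R K : Type*} [CommSemiring R] [CommSemiring K] [Algebra R K]
    (a : R) (x : K) :
    x ∈ Submodule.span R {algebraMap R K a} ↔ ∃ r : R, algebraMap R K (a * r) = x := by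
  simp only [Submodule.mem_span_singleton, Algebra.smul_def, map_mul, mul_comm]

section Lattice

variable {R K : Type*} [CommRing R] [Field K] [Algebra R K]

variable (R K) in
def hereditaryLattice (t : R) (e : ℕ) (i : ℤ) : Set (Matrix (Fin e) (Fin e) K) :=
  {M | ∀ j k, M j k ∈ Submodule.span R {algebraMap R K t ^ hereditaryExponent e i j k}}

variable {t : R} {e : ℕ}

lemma stdHereditaryOrder_eq_hereditaryLattice_zero :
    stdHereditaryOrder R K t e = hereditaryLattice R K t e 0 := by
  ext M
  refine forall₂_congr fun j k => ?_
  rw [hereditaryExponent_zero]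
  split_ifs
  · rw [zpow_one, mem_span_algebraMap_iff]
  · rw [zpow_zero, ← map_one (algebraMap R K), mem_span_algebraMap_iff]
    simp only [one_mul]

lemma yMat_eq_diagonal_mul_permMatrix :
    yMat R K t e =
      diagonal (fun j => algebraMap R K t ^ finRotateCarry e j) * (finRotate e).permMatrix K := by
  ext j k
  simp only [diagonal_mul, Equiv.Perm.permMatrix, PEquiv.toMatrix_apply, Equiv.toPEquiv_apply,
    Option.mem_def, Option.some.injEq, Fin.ext_iff, val_finRotate, yMat, of_apply, finRotateCarry]
  have := k.isLt
  split_ifs <;> first | omega | simp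

lemma yMat_mul_apply (M : Matrix (Fin e) (Fin e) K) (j k : Fin e) :
    (yMat R K t e * M) j k = algebraMap R K t ^ finRotateCarry e j * M (finRotate e j) k := by
  rw [yMat_eq_diagonal_mul_permMatrix, Matrix.mul_assoc, diagonal_mul,
    PEquiv.toMatrix_toPEquiv_mul, submatrix_apply, id]

lemma isUnit_yMat (hc : algebraMap R K t ≠ 0) : IsUnit (yMat R K t e) := by
  rw [yMat_eq_diagonal_mul_permMatrix]
  refine (isUnit_diagonal.mpr (Pi.isUnit_iff.mpr fun j => (zpow_ne_zero _ hc).isUnit)).mul ?_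
  refine IsUnit.of_mul_eq_one ((finRotate e)⁻¹.permMatrix K) ?_
  rw [← permMatrix_mul, inv_mul_cancel, permMatrix_one]

lemma yMat_mul_mem_hereditaryLattice_iff (hc : algebraMap R K t ≠ 0) (i : ℤ)
    (M : Matrix (Fin e) (Fin e) K) :
    yMat R K t e * M ∈ hereditaryLattice R K t e (i + 1) ↔ M ∈ hereditaryLattice R K t e i := by
  simp only [hereditaryLattice, Set.mem_ofPred_eq, yMat_mul_apply, hereditaryExponent_add_one,
    zpow_add₀ hc, mul_mem_span_singleton_mul_iff (zpow_ne_zero _ hc)]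
  exact (finRotate e).forall_congr_right
    (q := fun j => ∀ k, M j k ∈ Submodule.span R {algebraMap R K t ^ hereditaryExponent e i j k})

lemma zpow_mul_mem_hereditaryLattice_iff (hc : algebraMap R K t ≠ 0)
    {u : (Matrix (Fin e) (Fin e) K)ˣ} (hu : (u : Matrix (Fin e) (Fin e) K) = yMat R K t e)
    (i : ℤ) (M : Matrix (Fin e) (Fin e) K) :
    (↑(u ^ i) : Matrix (Fin e) (Fin e) K) * M ∈ hereditaryLattice R K t e i ↔
      M ∈ hereditaryLattice R K t e 0 := by
  induction i using Int.induction_on with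
  | zero => simp only [zpow_zero, Units.val_one, Matrix.one_mul]
  | succ n ih =>
    rw [← ih, ← yMat_mul_mem_hereditaryLattice_iff hc n, ← hu, ← Matrix.mul_assoc, ← Units.val_mul,
      ← _root_.zpow_one_add, add_comm 1]
  | pred n ih =>
    rw [← ih, ← yMat_mul_mem_hereditaryLattice_iff hc (-n - 1), sub_add_cancel, ← hu,
      ← Matrix.mul_assoc, ← Units.val_mul, ← _root_.zpow_one_add, add_sub_cancel]

end Lattice

theorem yMat_zpow_mul_stdHereditaryOrder_general (R K : Type*) [CommRing R] [IsDomain R]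
    [IsDiscreteValuationRing R] [Field K] [Algebra R K] [IsFractionRing R K]
    (t : R) (ht : Ideal.span {t} = IsLocalRing.maximalIdeal R)
    (e : ℕ) :
    IsUnit (yMat R K t e) ∧
    ∀ u : (Matrix (Fin e) (Fin e) K)ˣ, (u : Matrix (Fin e) (Fin e) K) = yMat R K t e →
      ∀ i : ℤ,
        (fun M => ((u ^ i : (Matrix (Fin e) (Fin e) K)ˣ) : Matrix (Fin e) (Fin e) K) * M) ''
            stdHereditaryOrder R K t e
          = {M : Matrix (Fin e) (Fin e) K | ∀ j k : Fin e,
              M j k ∈ Submodule.span R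
                {(algebraMap R K t) ^ (-(Int.fdiv ((k : ℤ) - (j : ℤ) - i) (e : ℤ)))}} := by
  have hc : algebraMap R K t ≠ 0 :=
    (map_ne_zero_iff _ (IsFractionRing.injective R K)).mpr
      ((IsDiscreteValuationRing.irreducible_iff_uniformizer t).mpr ht.symm).ne_zero
  refine ⟨isUnit_yMat hc, fun u hu i => Set.ext fun N => ?_⟩
  change N ∈ (u ^ i) • stdHereditaryOrder R K t e ↔ N ∈ hereditaryLattice R K t e i
  rw [Set.mem_smul_set_iff_inv_smul_mem, Units.smul_def, smul_eq_mul,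
    stdHereditaryOrder_eq_hereditaryLattice_zero, ← zpow_mul_mem_hereditaryLattice_iff hc hu,
    Units.mul_inv_cancel_left]

/-- `y` is invertible, and for every integer `i`, the set `y^i · Δ` equals the
set of matrices whose `(j,k)` entry lies in the `R`-submodule of `K` spanned by
`t ^ (-⌊(k - j - i)/e⌋)`. -/
theorem yMat_zpow_mul_stdHereditaryOrder (R K : Type*) [CommRing R] [IsDomain R]
    [IsDiscreteValuationRing R] [Field K] [Algebra R K] [IsFractionRing R K]
    (t : R) (ht : Ideal.span {t} = IsLocalRing.maximalIdeal R)
    (e : ℕ) (he : 1 ≤ e) :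
    IsUnit (yMat R K t e) ∧
    ∀ u : (Matrix (Fin e) (Fin e) K)ˣ, (u : Matrix (Fin e) (Fin e) K) = yMat R K t e →
      ∀ i : ℤ,
        (fun M => ((u ^ i : (Matrix (Fin e) (Fin e) K)ˣ) : Matrix (Fin e) (Fin e) K) * M) ''
            stdHereditaryOrder R K t e
          = {M : Matrix (Fin e) (Fin e) K | ∀ j k : Fin e,
              M j k ∈ Submodule.span R
                {(algebraMap R K t) ^ (-(Int.fdiv ((k : ℤ) - (j : ℤ) - i) (e : ℤ)))}} :=
  yMat_zpow_mul_stdHereditaryOrder_general R K t ht e
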